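/- Let $H$ and $K$ be positive definite symmetric $m \times m$ matrices with $K = I - H$, $\operatorname{tr}(H) \leq 1$, and $m \geq 3$. Suppose $J \geq 0$ satisfies $\det(K) \cdot J \leq \frac{(m-1)^m}{m^{m/2}} \det(H)^{1/2}$. Then $J \leq 1$. -/

import Mathlib

/-!
The eigenvalues `λᵢ` of `H` are positive with `∑ λᵢ ≤ 1`, and `K = 1 - H` has eigenvalues
`1 - λᵢ`; so it suffices to show `(m-1)^(2m) ∏ λᵢ ≤ m^m (∏ (1 - λᵢ))²`, i.e. that
`∏ λᵢ / (1 - λᵢ)²` is largest at the barycentre `λᵢ = 1/m`. As `λ / (1 - λ)²` is increasing we may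
assume `∑ λᵢ = 1`. If every `λᵢ ≤ 1/2`, the function `log λ - 2 log (1 - λ)` lies below its tangent
at `1/m` on `(0, 1/2]`, and summing these tangent inequalities gives the bound. If some `λₖ > 1/2`
and `m ≥ 4`, AM-GM for the other eigenvalues and `∏ (1 - λᵢ) ≥ 1 - ∑ λᵢ` reduce it to the numerical
inequality `2 (m-1)^(m+1) ≤ 2^(m-3) m^m`. For `m = 3` it is the symmetric inequality
`64 abc (a+b+c)³ ≤ 27 ((a+b)(b+c)(c+a))²`.
-/

open Finset Real

lemma one_sub_sum_le_prod_one_sub {ι : Type*} (s : Finset ι) {f : ι → ℝ}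
    (h0 : ∀ i ∈ s, 0 ≤ f i) (h1 : ∀ i ∈ s, f i ≤ 1) :
    1 - ∑ i ∈ s, f i ≤ ∏ i ∈ s, (1 - f i) := by
  classical
  induction s using Finset.cons_induction with
  | empty => simp
  | cons a s ha ih =>
    rw [forall_mem_cons] at h0 h1
    rw [prod_cons, sum_cons]
    have hrest := mul_le_mul_of_nonneg_left (ih h0.2 h1.2) (sub_nonneg.2 h1.1)
    nlinarith [mul_nonneg h0.1 (sum_nonneg h0.2)]

lemma prod_le_sum_div_card_pow {ι : Type*} (s : Finset ι) {f : ι → ℝ} (hf : ∀ i ∈ s, 0 ≤ f i) :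
    ∏ i ∈ s, f i ≤ ((∑ i ∈ s, f i) / #s) ^ #s := by
  rcases s.eq_empty_or_nonempty with rfl | hs
  · simp
  have hcard : (#s : ℝ) ≠ 0 := by exact_mod_cast hs.card_pos.ne'
  have amgm := geom_mean_le_arith_mean s (fun _ => 1) f (fun _ _ => zero_le_one)
    (by simpa using hs.card_pos) hf
  simp only [rpow_one, sum_const, nsmul_eq_mul, mul_one, one_mul] at amgm
  calc ∏ i ∈ s, f i = ((∏ i ∈ s, f i) ^ (#s : ℝ)⁻¹) ^ #s :=
        (rpow_inv_natCast_pow (prod_nonneg hf) (by exact_mod_cast hcard)).symm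
    _ ≤ ((∑ i ∈ s, f i) / #s) ^ #s := by gcongr; exact rpow_nonneg (prod_nonneg hf) _

lemma hasDerivAt_log_sub_two_mul_log_one_sub {x : ℝ} (hx0 : 0 < x) (hx1 : x < 1) :
    HasDerivAt (fun y => log y - 2 * log (1 - y)) (1 / x + 2 / (1 - x)) x := by
  have h := (hasDerivAt_log hx0.ne').fun_sub
    ((((hasDerivAt_id x).const_sub 1).log (sub_pos.2 hx1).ne').const_mul 2)
  exact h.congr_deriv (by simp only [id]; ring)

lemma one_div_add_two_div_one_sub_le {p y : ℝ} (hp : 0 < p) (hp3 : p ≤ 1 / 3) (hy : 0 < y)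
    (hy2 : y ≤ 1 / 2) :
    (y - p) * (1 / y + 2 / (1 - y)) ≤ (y - p) * (1 / p + 2 / (1 - p)) := by
  have key : 1 / p + 2 / (1 - p) - (1 / y + 2 / (1 - y)) =
      (y - p) * (1 - p - y - p * y) / (p * y * (1 - p) * (1 - y)) := by
    have : 1 - p ≠ 0 := by linarith
    have : 1 - y ≠ 0 := by linarith
    field_simp
    ring
  have : 0 ≤ (y - p) * (1 / p + 2 / (1 - p) - (1 / y + 2 / (1 - y))) := by
    rw [key, ← mul_div_assoc, ← mul_assoc]
    apply div_nonneg
    · apply mul_nonneg (mul_self_nonneg _)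
      nlinarith
    · apply mul_nonneg (mul_nonneg (mul_nonneg hp.le hy.le) _) _ <;> linarith
  linarith

lemma log_sub_two_mul_log_one_sub_le {p x : ℝ} (hp : 0 < p) (hp3 : p ≤ 1 / 3)
    (hx : 0 < x) (hx2 : x ≤ 1 / 2) :
    log x - 2 * log (1 - x) ≤ log p - 2 * log (1 - p) + (1 / p + 2 / (1 - p)) * (x - p) := by
  set f : ℝ → ℝ := fun y => log y - 2 * log (1 - y)
  have hf : ∀ y, 0 < y → y ≤ 1 / 2 → HasDerivAt f (1 / y + 2 / (1 - y)) y := fun y hy hy2 =>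
    hasDerivAt_log_sub_two_mul_log_one_sub hy (by linarith)
  have hcont {a b : ℝ} (ha : 0 < a) (hb : b ≤ 1 / 2) : ContinuousOn f (Set.Icc a b) :=
    fun y hy => (hf y (by linarith [hy.1]) (hy.2.trans hb)).continuousAt.continuousWithinAt
  have hdiff {a b : ℝ} (ha : 0 < a) (hb : b ≤ 1 / 2) :
      DifferentiableOn ℝ f (interior (Set.Icc a b)) := by
    rw [interior_Icc]
    exact fun y hy =>
      (hf y (by linarith [hy.1]) (by linarith [hy.2])).differentiableAt.differentiableWithinAt
  rcases le_total x p with hxp | hpx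
  · have hderiv : ∀ y ∈ interior (Set.Icc x p), 1 / p + 2 / (1 - p) ≤ deriv f y := by
      intro y hy
      rw [interior_Icc] at hy
      rw [(hf y (by linarith [hy.1]) (by linarith [hy.2])).deriv]
      exact (mul_le_mul_left_of_neg (sub_neg.2 hy.2)).1
        (one_div_add_two_div_one_sub_le hp hp3 (by linarith [hy.1]) (by linarith [hy.2]))
    have := (convex_Icc x p).mul_sub_le_image_sub_of_le_deriv (hcont hx (by linarith))
      (hdiff hx (by linarith)) hderiv x ⟨le_rfl, hxp⟩ p ⟨hxp, le_rfl⟩ hxp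
    linarith
  · have hderiv : ∀ y ∈ interior (Set.Icc p x), deriv f y ≤ 1 / p + 2 / (1 - p) := by
      intro y hy
      rw [interior_Icc] at hy
      rw [(hf y (by linarith [hy.1]) (by linarith [hy.2])).deriv]
      exact le_of_mul_le_mul_left
        (one_div_add_two_div_one_sub_le hp hp3 (by linarith [hy.1]) (by linarith [hy.2]))
        (sub_pos.2 hy.1)
    have := (convex_Icc p x).image_sub_le_mul_sub_of_deriv_le (hcont hp hx2)
      (hdiff hp hx2) hderiv p ⟨le_rfl, hpx⟩ x ⟨hpx, le_rfl⟩ hpx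
    linarith

lemma prod_le_prod_one_sub_sq_of_forall_le_half {m : ℕ} (hm : 3 ≤ m) {x : Fin m → ℝ}
    (hx : ∀ i, 0 < x i) (hsum : ∑ i, x i ≤ 1) (hhalf : ∀ i, x i ≤ 1 / 2) :
    ((m : ℝ) - 1) ^ (2 * m) * ∏ i, x i ≤ (m : ℝ) ^ m * (∏ i, (1 - x i)) ^ 2 := by
  have hm3 : (3 : ℝ) ≤ m := by exact_mod_cast hm
  set p : ℝ := 1 / m with hp_def
  have hp : 0 < p := by positivity
  have hp3 : p ≤ 1 / 3 := one_div_le_one_div_of_le (by norm_num) hm3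
  have hx1 : ∀ i, 0 < 1 - x i := fun i => by linarith [hhalf i]
  have hlog : ∑ i, (log (x i) - 2 * log (1 - x i)) ≤ m * (log p - 2 * log (1 - p)) :=
    calc ∑ i, (log (x i) - 2 * log (1 - x i))
        ≤ ∑ i, (log p - 2 * log (1 - p) + (1 / p + 2 / (1 - p)) * (x i - p)) :=
          sum_le_sum fun i _ => log_sub_two_mul_log_one_sub_le hp hp3 (hx i) (hhalf i)
      _ = m * (log p - 2 * log (1 - p)) + (1 / p + 2 / (1 - p)) * (∑ i, x i - 1) := by
          have hmp : (m : ℝ) * p = 1 := mul_one_div_cancel (by positivity)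
          simp only [sum_add_distrib, ← mul_sum, sum_sub_distrib, sum_const, card_univ,
            Fintype.card_fin, nsmul_eq_mul]
          linear_combination -(1 / p + 2 / (1 - p)) * hmp
      _ ≤ m * (log p - 2 * log (1 - p)) := by
          have : 0 ≤ 1 / p + 2 / (1 - p) := by
            have : 0 < 1 - p := by linarith
            positivity
          nlinarith
  have hlog_p : log p = -log m := by rw [hp_def, one_div, log_inv]
  have hlog_one_sub_p : log (1 - p) = log (m - 1) - log m := by
    rw [hp_def, one_sub_div (by positivity), log_div (by linarith) (by positivity)]
  have hm1 : (0 : ℝ) < m - 1 := by linarith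
  have hP : 0 < ∏ i, x i := prod_pos fun i _ => hx i
  have hQ : 0 < ∏ i, (1 - x i) := prod_pos fun i _ => hx1 i
  rw [← log_le_log_iff (by positivity) (by positivity), log_mul (by positivity) hP.ne',
    log_mul (by positivity) (by positivity), log_pow, log_pow, log_pow,
    log_prod fun i _ => (hx i).ne', log_prod fun i _ => (hx1 i).ne']
  rw [sum_sub_distrib, ← mul_sum, hlog_p, hlog_one_sub_p] at hlog
  push_cast
  linarith

lemma sq_pow_le_two_mul_sq_sub_one_pow {n : ℕ} (hn : 3 ≤ n) :
    ((n : ℝ) ^ 2) ^ (n + 1) ≤ 2 * ((n : ℝ) ^ 2 - 1) ^ (n + 1) := by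
  have hn3 : (3 : ℝ) ≤ n := by exact_mod_cast hn
  have hsq : (0 : ℝ) < (n : ℝ) ^ 2 := by positivity
  have hbern := one_add_mul_le_pow (a := -1 / (n : ℝ) ^ 2)
    (by rw [neg_div, neg_le_neg_iff, div_le_iff₀ hsq]; nlinarith) (n + 1)
  have hhalf : ((n + 1 : ℕ) : ℝ) * (-1 / (n : ℝ) ^ 2) ≥ -1 / 2 := by
    rw [mul_div_assoc', ge_iff_le, div_le_div_iff₀ (by norm_num) hsq]
    push_cast
    nlinarith
  have hfactor : (n : ℝ) ^ 2 - 1 = (n : ℝ) ^ 2 * (1 + -1 / (n : ℝ) ^ 2) := by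
    field_simp
    ring
  rw [hfactor, mul_pow]
  nlinarith [pow_pos hsq (n + 1)]

lemma two_mul_sub_one_pow_succ_le {m : ℕ} (hm : 4 ≤ m) :
    2 * ((m : ℝ) - 1) ^ (m + 1) ≤ 2 ^ (m - 3) * (m : ℝ) ^ m := by
  induction m, hm using Nat.le_induction with
  | base => norm_num
  | succ n hn ih =>
    have hpow : (2 : ℝ) ^ (n - 2) = 2 * 2 ^ (n - 3) := by
      rw [show n - 2 = n - 3 + 1 by omega, pow_succ, mul_comm]
    have hn0 : (0 : ℝ) < (n : ℝ) ^ n := by positivity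
    push_cast
    rw [add_sub_cancel_right, hpow]
    refine le_of_mul_le_mul_right ?_ hn0
    calc 2 * (n : ℝ) ^ (n + 1 + 1) * n ^ n = 2 * ((n : ℝ) ^ 2) ^ (n + 1) := by ring
      _ ≤ 4 * ((n : ℝ) ^ 2 - 1) ^ (n + 1) := by
          linarith [sq_pow_le_two_mul_sq_sub_one_pow (n := n) (by omega)]
      _ = 2 * ((n : ℝ) + 1) ^ (n + 1) * (2 * ((n : ℝ) - 1) ^ (n + 1)) := by
          rw [show (n : ℝ) ^ 2 - 1 = (n + 1) * (n - 1) by ring, mul_pow]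
          ring
      _ ≤ 2 * ((n : ℝ) + 1) ^ (n + 1) * (2 ^ (n - 3) * n ^ n) := by gcongr
      _ = 2 * 2 ^ (n - 3) * ((n : ℝ) + 1) ^ (n + 1) * n ^ n := by ring

lemma prod_le_prod_one_sub_sq_of_half_lt {m : ℕ} (hm : 4 ≤ m) {x : Fin m → ℝ}
    (hx : ∀ i, 0 < x i) (hsum : ∑ i, x i = 1) {k : Fin m} (hk : 1 / 2 < x k) :
    ((m : ℝ) - 1) ^ (2 * m) * ∏ i, x i ≤ (m : ℝ) ^ m * (∏ i, (1 - x i)) ^ 2 := by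
  set s := univ.erase k
  set r := ∑ i ∈ s, x i
  have hcard : #s = m - 1 := by simp [s]
  have hxk : x k = 1 - r := by rw [← hsum, ← add_sum_erase _ _ (mem_univ k)]; ring
  have hr0 : 0 < r := sum_pos (fun i _ => hx i) (card_pos.1 (by omega))
  have hr : r ≤ 1 / 2 := by linarith
  have hm1 : (0 : ℝ) < m - 1 := by
    have : (4 : ℝ) ≤ m := by exact_mod_cast hm
    linarith
  have hP : ∏ i ∈ s, x i ≤ (r / (m - 1)) ^ (m - 1) := by
    have := prod_le_sum_div_card_pow s fun i _ => (hx i).le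
    rwa [hcard, Nat.cast_sub (by omega), Nat.cast_one] at this
  have hW : 1 - r ≤ ∏ i ∈ s, (1 - x i) :=
    one_sub_sum_le_prod_one_sub s (fun i _ => (hx i).le)
      fun i hi => (single_le_sum (fun j _ => (hx j).le) hi).trans (by linarith)
  have hnum : ((m : ℝ) - 1) ^ (m + 1) * r ^ (m - 3) ≤ m ^ m * (1 - r) :=
    calc ((m : ℝ) - 1) ^ (m + 1) * r ^ (m - 3)
        ≤ ((m : ℝ) - 1) ^ (m + 1) * (1 / 2) ^ (m - 3) := by gcongr
      _ = 2 * ((m : ℝ) - 1) ^ (m + 1) / 2 ^ (m - 3) / 2 := by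
          rw [one_div_pow]
          field_simp
      _ ≤ m ^ m * (1 / 2) := by
          rw [div_div, div_le_iff₀ (by positivity)]
          linarith [two_mul_sub_one_pow_succ_le hm]
      _ ≤ m ^ m * (1 - r) := by gcongr; linarith
  rw [← mul_prod_erase univ x (mem_univ k),
    ← mul_prod_erase univ (fun i => 1 - x i) (mem_univ k), hxk, sub_sub_cancel]
  calc ((m : ℝ) - 1) ^ (2 * m) * ((1 - r) * ∏ i ∈ s, x i)
      ≤ ((m : ℝ) - 1) ^ (2 * m) * ((1 - r) * (r / (m - 1)) ^ (m - 1)) := by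
        gcongr
        linarith
    _ = ((m : ℝ) - 1) ^ (m + 1) * r ^ (m - 3) * (r ^ 2 * (1 - r)) := by
        have e : ((m : ℝ) - 1) ^ (m - 1) * (r / (m - 1)) ^ (m - 1) = r ^ (m - 3) * r ^ 2 := by
          rw [← mul_pow, mul_div_cancel₀ _ hm1.ne', ← pow_add]
          congr 1
          omega
        rw [show 2 * m = (m + 1) + (m - 1) by omega, pow_add]
        linear_combination ((m : ℝ) - 1) ^ (m + 1) * (1 - r) * e
    _ ≤ m ^ m * (1 - r) * (r ^ 2 * (1 - r)) :=
        mul_le_mul_of_nonneg_right hnum (mul_nonneg (sq_nonneg r) (by linarith))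
    _ = m ^ m * (r * (1 - r)) ^ 2 := by ring
    _ ≤ m ^ m * (r * ∏ i ∈ s, (1 - x i)) ^ 2 := by
        gcongr
        exact mul_nonneg hr0.le (by linarith)

lemma sixtyfour_mul_le_twentyseven_mul_sq {a b c : ℝ} (ha : 0 ≤ a) (hb : 0 ≤ b) (hc : 0 ≤ c) :
    64 * (a * b * c) * (a + b + c) ^ 3 ≤ 27 * ((a + b) * (b + c) * (c + a)) ^ 2 := by
  have h₁ : 8 * ((a + b + c) * (a * b + b * c + c * a)) ≤ 9 * ((a + b) * (b + c) * (c + a)) := by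
    nlinarith [mul_nonneg ha (sq_nonneg (b - c)), mul_nonneg hb (sq_nonneg (c - a)),
      mul_nonneg hc (sq_nonneg (a - b))]
  have h₂ : 3 * (a * b * c) * (a + b + c) ≤ (a * b + b * c + c * a) ^ 2 := by
    nlinarith [sq_nonneg (a * b - b * c), sq_nonneg (b * c - c * a), sq_nonneg (c * a - a * b)]
  have h₀ : 0 ≤ (a + b + c) * (a * b + b * c + c * a) := by positivity
  calc 64 * (a * b * c) * (a + b + c) ^ 3
        = 64 / 3 * (a + b + c) ^ 2 * (3 * (a * b * c) * (a + b + c)) := by ring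
    _ ≤ 64 / 3 * (a + b + c) ^ 2 * (a * b + b * c + c * a) ^ 2 := by gcongr
    _ = (8 * ((a + b + c) * (a * b + b * c + c * a))) ^ 2 / 3 := by ring
    _ ≤ (9 * ((a + b) * (b + c) * (c + a))) ^ 2 / 3 := by gcongr
    _ = 27 * ((a + b) * (b + c) * (c + a)) ^ 2 := by ring

lemma prod_le_prod_one_sub_sq_fin_three {x : Fin 3 → ℝ} (hx : ∀ i, 0 < x i)
    (hsum : ∑ i, x i = 1) :
    64 * ∏ i, x i ≤ 27 * (∏ i, (1 - x i)) ^ 2 := by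
  rw [Fin.sum_univ_three] at hsum
  rw [Fin.prod_univ_three, Fin.prod_univ_three, show 1 - x 0 = x 1 + x 2 by linarith,
    show 1 - x 1 = x 2 + x 0 by linarith, show 1 - x 2 = x 0 + x 1 by linarith]
  calc 64 * (x 0 * x 1 * x 2) = 64 * (x 0 * x 1 * x 2) * (x 0 + x 1 + x 2) ^ 3 := by
        rw [hsum]; ring
    _ ≤ 27 * ((x 0 + x 1) * (x 1 + x 2) * (x 2 + x 0)) ^ 2 :=
        sixtyfour_mul_le_twentyseven_mul_sq (hx 0).le (hx 1).le (hx 2).le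
    _ = 27 * ((x 1 + x 2) * (x 2 + x 0) * (x 0 + x 1)) ^ 2 := by ring

lemma prod_le_prod_one_sub_sq_of_sum_eq_one {m : ℕ} (hm : 3 ≤ m) {x : Fin m → ℝ}
    (hx : ∀ i, 0 < x i) (hsum : ∑ i, x i = 1) :
    ((m : ℝ) - 1) ^ (2 * m) * ∏ i, x i ≤ (m : ℝ) ^ m * (∏ i, (1 - x i)) ^ 2 := by
  obtain rfl | hm4 := hm.eq_or_lt
  · norm_num
    exact prod_le_prod_one_sub_sq_fin_three hx hsum
  by_cases hsmall : ∀ i, x i ≤ 1 / 2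
  · exact prod_le_prod_one_sub_sq_of_forall_le_half hm hx hsum.le hsmall
  · obtain ⟨k, hk⟩ := not_forall.1 hsmall
    exact prod_le_prod_one_sub_sq_of_half_lt hm4 hx hsum (lt_of_not_ge hk)

lemma prod_le_prod_one_sub_sq_of_sum_le_one {m : ℕ} (hm : 3 ≤ m) {x : Fin m → ℝ}
    (hx : ∀ i, 0 < x i) (hsum : ∑ i, x i ≤ 1) :
    ((m : ℝ) - 1) ^ (2 * m) * ∏ i, x i ≤ (m : ℝ) ^ m * (∏ i, (1 - x i)) ^ 2 := by
  set s := ∑ i, x i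
  have hs : 0 < s := sum_pos (fun i _ => hx i) (univ_nonempty_iff.2 ⟨⟨0, by omega⟩⟩)
  have hm1 : (0 : ℝ) ≤ m - 1 := by
    have : (3 : ℝ) ≤ m := by exact_mod_cast hm
    linarith
  have hle : ∀ i, x i ≤ x i / s := fun i => le_div_self (hx i).le hs hsum
  have hle_one : ∀ i, x i / s ≤ 1 := fun i =>
    div_le_one_of_le₀ (single_le_sum (fun j _ => (hx j).le) (mem_univ i)) hs.le
  calc ((m : ℝ) - 1) ^ (2 * m) * ∏ i, x i ≤ ((m : ℝ) - 1) ^ (2 * m) * ∏ i, (x i / s) :=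
        mul_le_mul_of_nonneg_left (prod_le_prod (fun i _ => (hx i).le) fun i _ => hle i)
          (pow_nonneg hm1 _)
    _ ≤ m ^ m * (∏ i, (1 - x i / s)) ^ 2 :=
        prod_le_prod_one_sub_sq_of_sum_eq_one hm (fun i => div_pos (hx i) hs)
          (by rw [← sum_div, div_self hs.ne'])
    _ ≤ m ^ m * (∏ i, (1 - x i)) ^ 2 := by
        have hnonneg : ∀ i ∈ univ, 0 ≤ 1 - x i / s := fun i _ => sub_nonneg.2 (hle_one i)
        gcongr
        · exact prod_nonneg hnonneg
        · exact hnonneg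
        · exact hle _

lemma Matrix.IsHermitian.det_one_sub {n 𝕜 : Type*} [Fintype n] [DecidableEq n] [RCLike 𝕜]
    {A : Matrix n n 𝕜} (hA : A.IsHermitian) :
    (1 - A).det = ∏ i, (1 - (hA.eigenvalues i : 𝕜)) := by
  have h := A.eval_charpoly 1
  rw [map_one] at h
  rw [← h, hA.charpoly_eq, Polynomial.eval_prod]
  simp

lemma sub_one_pow_div_rpow_mul_sqrt_le {m : ℕ} (hm : 0 < m) {d k : ℝ} (hd : 0 ≤ d) (hk : 0 ≤ k)
    (h : ((m : ℝ) - 1) ^ (2 * m) * d ≤ m ^ m * k ^ 2) :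
    ((m : ℝ) - 1) ^ m / (m : ℝ) ^ ((m : ℝ) / 2) * √d ≤ k := by
  have hm0 : (0 : ℝ) < m := by exact_mod_cast hm
  have hsq : ((m : ℝ) ^ ((m : ℝ) / 2)) ^ 2 = m ^ m := by
    rw [← rpow_natCast, ← rpow_mul hm0.le, ← rpow_natCast]
    norm_num
  refine (le_abs_self _).trans (abs_le_of_sq_le_sq ?_ hk)
  rw [mul_pow, div_pow, hsq, sq_sqrt hd, ← pow_mul, div_mul_eq_mul_div, mul_comm m 2,
    div_le_iff₀ (by positivity)]
  linarith

theorem jacobian_le_one_general (m : ℕ) (hm : 3 ≤ m)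
    (H K : Matrix (Fin m) (Fin m) ℝ) (hHpos : H.PosDef) (hKpos : K.PosDef)
    (hK : K = 1 - H) (htr : H.trace ≤ 1)
    (J : ℝ)
    (hineq : K.det * J ≤ (((m : ℝ) - 1) ^ m / (m : ℝ) ^ ((m : ℝ) / 2)) * Real.sqrt H.det) :
    J ≤ 1 := by
  have hH := hHpos.isHermitian
  have hdet : ((m : ℝ) - 1) ^ (2 * m) * H.det ≤ (m : ℝ) ^ m * K.det ^ 2 := by
    rw [hH.det_eq_prod_eigenvalues, hK, hH.det_one_sub]
    simpa using prod_le_prod_one_sub_sq_of_sum_le_one hm hHpos.eigenvalues_pos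
      (by simpa [hH.trace_eq_sum_eigenvalues] using htr)
  have hbound := sub_one_pow_div_rpow_mul_sqrt_le (by omega) hHpos.det_pos.le hKpos.det_pos.le hdet
  exact le_of_mul_le_mul_left (by simpa using hineq.trans hbound) hKpos.det_pos

/-- **Jacobian bound.** If `H` and `K = I - H` are positive definite symmetric
`m × m` matrices with `tr H ≤ 1` and `m ≥ 3`, and `J ≥ 0` satisfies
`det K · J ≤ ((m-1)^m / m^(m/2)) · (det H)^(1/2)`, then `J ≤ 1`. -/
theorem jacobian_le_one (m : ℕ) (hm : 3 ≤ m)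
    (H K : Matrix (Fin m) (Fin m) ℝ) (hHpos : H.PosDef) (hKpos : K.PosDef)
    (hK : K = 1 - H) (htr : H.trace ≤ 1)
    (J : ℝ) (hJ : 0 ≤ J)
    (hineq : K.det * J ≤ (((m : ℝ) - 1) ^ m / (m : ℝ) ^ ((m : ℝ) / 2)) * Real.sqrt H.det) :
    J ≤ 1 :=
  jacobian_le_one_general m hm H K hHpos hKpos hK htr J hineq
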